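/- For any solution A of the ODE A'(t) = -f'(A(t)) - a·A(t) with the piecewise quadratic potential f, if a ≥ 0 and A(0) ∈ [0,1], then A(t) ∈ [0,1] for all t ≥ 0. -/
import Mathlib

theorem stmt10 (γ₁ γ₂ a : ℝ) (hγ₁ : 0 < γ₁) (hγ₂ : 0 < γ₂) (ha : 0 ≤ a)
    (f' : ℝ → ℝ)
    (hf' : ∀ x : ℝ, f' x = if x < 0 then 2 * γ₁ * x
      else if x ≤ 1 then 0 else 2 * γ₂ * (x - 1))
    (A : ℝ → ℝ)
    (hODE : ∀ t : ℝ, 0 ≤ t → HasDerivAt A (-f' (A t) - a * A t) t)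
    (hinit : A 0 ∈ Set.Icc (0 : ℝ) 1) :
    ∀ t : ℝ, 0 ≤ t → A t ∈ Set.Icc (0 : ℝ) 1 := by
  intro t ht
  have hcont : ContinuousOn A (Set.Icc 0 t) := fun x hx =>
    (hODE x hx.1).continuousAt.continuousWithinAt
  have hder : ∀ x ∈ Set.Ico (0:ℝ) t,
      HasDerivWithinAt A (-f' (A x) - a * A x) (Set.Ici x) x := fun x hx =>
    (hODE x hx.1).hasDerivWithinAt
  -- upper bound: A t ≤ 1 + ε for every ε > 0
  have hub : ∀ ε : ℝ, 0 < ε → A t ≤ 1 + ε := by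
    intro ε hε
    have := image_le_of_deriv_right_lt_deriv_boundary' (f := A)
      (f' := fun x => -f' (A x) - a * A x) (B := fun _ => 1 + ε) (B' := fun _ => 0)
      hcont hder (show A 0 ≤ 1 + ε by linarith [hinit.2]) continuousOn_const
      (fun x _ => hasDerivWithinAt_const x _ _) ?_ (Set.right_mem_Icc.2 ht)
    · exact this
    · intro x _ hx
      have hAx : A x = 1 + ε := hx
      show -f' (A x) - a * A x < 0
      have h1 : ¬ A x < 0 := by linarith
      have h2 : ¬ A x ≤ 1 := by linarith
      rw [hf', if_neg h1, if_neg h2, hAx]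
      nlinarith
  -- lower bound: -A t ≤ ε for every ε > 0
  have hlb : ∀ ε : ℝ, 0 < ε → -A t ≤ ε := by
    intro ε hε
    have := image_le_of_deriv_right_lt_deriv_boundary' (f := fun s => -A s)
      (f' := fun x => -(-f' (A x) - a * A x)) (B := fun _ => ε) (B' := fun _ => 0)
      hcont.neg (fun x hx => (hder x hx).neg) (show -A 0 ≤ ε by linarith [hinit.1]) continuousOn_const
      (fun x _ => hasDerivWithinAt_const x _ _) ?_ (Set.right_mem_Icc.2 ht)
    · exact this
    · intro x _ hx
      have hAx : A x = -ε := by have : -A x = ε := hx; linarith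
      show -(-f' (A x) - a * A x) < 0
      have h1 : A x < 0 := by linarith
      rw [hf', if_pos h1, hAx]
      nlinarith
  constructor
  · have : -A t ≤ 0 := le_of_forall_pos_le_add (by intro ε hε; simpa using hlb ε hε)
    linarith
  · have : A t ≤ 1 := le_of_forall_pos_le_add (fun ε hε => hub ε hε)
    exact this
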